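/- Let X and Y be random variables with distributions F and G, with F supported on all of ℝ and G satisfying G(0−)=0 and G(0)<1. Assume there is a bounded measurable function h : [0,∞) → (0,∞) with E[h(Y)] = 1 such that P[XY > x] ~ ∫₀^∞ h(y) F̄(x/y) G(dy) as x → ∞, and assume there is a function a(x) → ∞ with a(x)/x → 0 and Ḡ(a(x)) = o(H̄(x)), where H̄(x) = P[XY > x]. If F has positively decreasing tail, then H has positively decreasing tail. -/

import Mathlib

/-!
Write `I(x) = ∫₀^∞ h(y) F̄(x/y) G(dy)`, so that `H̄ ~ I`. Split `I(vx)` at `y = a(x)`. For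
`y ≤ a(x)` the argument `x/y ≥ x/a(x)` tends to infinity, so positive decrease of `F` gives
`F̄(vx/y) ≤ c F̄(x/y)` with `c < 1`, and this piece is at most `c I(x)`. For `y > a(x)` the
integrand is at most `K`, so that piece is at most `K Ḡ(a(x)) = o(H̄(x))`. Hence
`H̄(vx)/H̄(x) ≲ c + o(1)`.
-/

open Filter MeasureTheory Asymptotics Topology ProbabilityTheory Set

noncomputable def rtail {Ω : Type*} [MeasureSpace Ω] (Z : Ω → ℝ) (x : ℝ) : ℝ :=
  (ℙ {ω | x < Z ω}).toReal

section rtail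

variable {Ω : Type*} [MeasureSpace Ω] (Z : Ω → ℝ)

lemma rtail_nonneg (x : ℝ) : 0 ≤ rtail Z x := ENNReal.toReal_nonneg

lemma rtail_le_one [IsProbabilityMeasure (ℙ : Measure Ω)] (x : ℝ) : rtail Z x ≤ 1 := by
  simpa [rtail] using ENNReal.toReal_mono ENNReal.one_ne_top (prob_le_one (s := {ω | x < Z ω}))

lemma rtail_antitone [IsFiniteMeasure (ℙ : Measure Ω)] : Antitone (rtail Z) := fun _ _ hst =>
  ENNReal.toReal_mono (measure_ne_top _ _) (measure_mono fun _ hω => hst.trans_lt hω)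

lemma rtail_measurable [IsFiniteMeasure (ℙ : Measure Ω)] : Measurable (rtail Z) :=
  (rtail_antitone Z).measurable

end rtail

lemma MeasureTheory.Measure.map_apply_le {α β : Type*} [MeasurableSpace α] [MeasurableSpace β]
    (μ : Measure α) (f : α → β) {s : Set β} (hs : MeasurableSet s) :
    μ.map f s ≤ μ (f ⁻¹' s) := by
  by_cases hf : AEMeasurable f μ
  · exact (Measure.map_apply_of_aemeasurable hf hs).le
  · simp [Measure.map_of_not_aemeasurable hf]

noncomputable def weightedProductTail {Ω : Type*} [MeasureSpace Ω] (μ : Measure ℝ)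
    (h : ℝ → ℝ) (X : Ω → ℝ) (x : ℝ) : ℝ :=
  ∫ y in Ioi 0, h y * rtail X (x / y) ∂μ

section weightedProductTail

variable {Ω : Type*} [MeasureSpace Ω] (X : Ω → ℝ) {μ : Measure ℝ} {h : ℝ → ℝ} {K : ℝ}

lemma weightedProductTail_nonneg (h0 : ∀ y, 0 ≤ h y) (x : ℝ) :
    0 ≤ weightedProductTail μ h X x :=
  setIntegral_nonneg measurableSet_Ioi fun y _ => mul_nonneg (h0 y) (rtail_nonneg X _)

variable [IsProbabilityMeasure (ℙ : Measure Ω)]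

lemma integrableOn_mul_rtail [IsFiniteMeasure μ] (hmeas : Measurable h) (h0 : ∀ y, 0 ≤ h y)
    (hK : ∀ y, h y ≤ K) (x : ℝ) (s : Set ℝ) :
    IntegrableOn (fun y => h y * rtail X (x / y)) s μ := by
  have hm : Measurable fun y => h y * rtail X (x / y) :=
    hmeas.mul ((rtail_measurable X).comp (measurable_const.div measurable_id))
  refine Integrable.mono' (integrable_const K) hm.aestronglyMeasurable (ae_of_all _ fun y => ?_)
  rw [Real.norm_eq_abs, abs_of_nonneg (mul_nonneg (h0 y) (rtail_nonneg X _))]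
  calc h y * rtail X (x / y) ≤ h y * 1 := by gcongr; exacts [h0 y, rtail_le_one X _]
    _ ≤ K := by simpa using hK y

lemma setIntegral_Ioc_mul_rtail_le [IsFiniteMeasure μ] (hmeas : Measurable h)
    (h0 : ∀ y, 0 ≤ h y) (hK : ∀ y, h y ≤ K) {v c s x : ℝ} (hc : 0 ≤ c)
    (hnear : ∀ y ∈ Ioc 0 s, rtail X (v * (x / y)) ≤ c * rtail X (x / y)) :
    ∫ y in Ioc 0 s, h y * rtail X (v * x / y) ∂μ ≤ c * weightedProductTail μ h X x := by
  have hint := integrableOn_mul_rtail X hmeas h0 hK (μ := μ)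
  calc ∫ y in Ioc 0 s, h y * rtail X (v * x / y) ∂μ
      ≤ ∫ y in Ioc 0 s, c * (h y * rtail X (x / y)) ∂μ := by
        refine setIntegral_mono_on (hint _ _) ((hint x _).const_mul c) measurableSet_Ioc
          fun y hy => ?_
        rw [mul_div_assoc, mul_left_comm]
        exact mul_le_mul_of_nonneg_left (hnear y hy) (h0 y)
    _ = c * ∫ y in Ioc 0 s, h y * rtail X (x / y) ∂μ := integral_const_mul c _
    _ ≤ c * weightedProductTail μ h X x := by
        refine mul_le_mul_of_nonneg_left (setIntegral_mono_set (hint x _) ?_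
          Ioc_subset_Ioi_self.eventuallyLE) hc
        exact ae_of_all _ fun y => mul_nonneg (h0 y) (rtail_nonneg X _)

lemma setIntegral_Ioi_mul_rtail_le (hmeas : Measurable h) (h0 : ∀ y, 0 ≤ h y)
    (hK : ∀ y, h y ≤ K) (Y : Ω → ℝ) (s z : ℝ) :
    ∫ y in Ioi s, h y * rtail X (z / y) ∂(Measure.map Y ℙ) ≤ K * rtail Y s := by
  calc ∫ y in Ioi s, h y * rtail X (z / y) ∂(Measure.map Y ℙ)
      ≤ ∫ _ in Ioi s, K ∂(Measure.map Y ℙ) :=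
        setIntegral_mono_on (integrableOn_mul_rtail X hmeas h0 hK _ _) (integrable_const K)
          measurableSet_Ioi fun y _ => by
            simpa using mul_le_mul (hK y) (rtail_le_one X (z / y)) (rtail_nonneg X _)
              ((h0 y).trans (hK y))
    _ = K * ((Measure.map Y ℙ) (Ioi s)).toReal := by
        rw [setIntegral_const, smul_eq_mul, measureReal_def, mul_comm]
    _ ≤ K * rtail Y s := by
        exact mul_le_mul_of_nonneg_left (ENNReal.toReal_mono (measure_ne_top _ _)
          (Measure.map_apply_le _ _ measurableSet_Ioi)) ((h0 0).trans (hK 0))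

lemma weightedProductTail_mul_le (hmeas : Measurable h) (h0 : ∀ y, 0 ≤ h y)
    (hK : ∀ y, h y ≤ K) (Y : Ω → ℝ) {v c s x : ℝ} (hc : 0 ≤ c)
    (hnear : ∀ y ∈ Ioc 0 s, rtail X (v * (x / y)) ≤ c * rtail X (x / y)) :
    weightedProductTail (Measure.map Y ℙ) h X (v * x) ≤
      c * weightedProductTail (Measure.map Y ℙ) h X x + K * rtail Y s := by
  have hint := integrableOn_mul_rtail X hmeas h0 hK (μ := Measure.map Y ℙ) (v * x)
  have hcover : Ioi (0 : ℝ) ⊆ Ioc 0 s ∪ Ioi s := fun y hy => by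
    rcases le_or_gt y s with hys | hys
    exacts [Or.inl ⟨hy, hys⟩, Or.inr hys]
  calc weightedProductTail (Measure.map Y ℙ) h X (v * x)
      ≤ ∫ y in Ioc 0 s ∪ Ioi s, h y * rtail X (v * x / y) ∂(Measure.map Y ℙ) :=
        setIntegral_mono_set (hint _)
          (ae_of_all _ fun y => mul_nonneg (h0 y) (rtail_nonneg X _)) hcover.eventuallyLE
    _ = (∫ y in Ioc 0 s, h y * rtail X (v * x / y) ∂(Measure.map Y ℙ)) +
          ∫ y in Ioi s, h y * rtail X (v * x / y) ∂(Measure.map Y ℙ) :=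
        setIntegral_union Ioc_disjoint_Ioi_same measurableSet_Ioi (hint _) (hint _)
    _ ≤ c * weightedProductTail (Measure.map Y ℙ) h X x + K * rtail Y s :=
        add_le_add (setIntegral_Ioc_mul_rtail_le X hmeas h0 hK hc hnear)
          (setIntegral_Ioi_mul_rtail_le X hmeas h0 hK Y s _)

end weightedProductTail

lemma eventually_le_mul_of_limsup_div_lt {f : ℝ → ℝ} (hf : Antitone f) (hf0 : ∀ x, 0 ≤ f x)
    {v c : ℝ} (hv : 1 ≤ v) (hc : limsup (fun x => f (v * x) / f x) atTop < c) :
    ∀ᶠ x in atTop, f (v * x) ≤ c * f x := by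
  have hle : ∀ x, 0 ≤ x → f (v * x) ≤ f x := fun x hx => hf (le_mul_of_one_le_left hx hv)
  have hbdd : IsBoundedUnder (· ≤ ·) atTop fun x => f (v * x) / f x :=
    isBoundedUnder_of_eventually_le (a := 1) <| (eventually_ge_atTop 0).mono fun x hx =>
      div_le_one_of_le₀ (hle x hx) (hf0 x)
  filter_upwards [eventually_lt_of_limsup_lt hc hbdd, eventually_ge_atTop 0] with x hlt hx
  -- where `f x = 0` the ratio is the junk value `0`, so the bound comes from antitonicity
  rcases (hf0 x).eq_or_lt with hfx | hfx
  · simpa [← hfx] using hle x hx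
  · exact ((div_lt_iff₀ hfx).mp hlt).le

lemma eventually_forall_Ioc_le_div {a : ℝ → ℝ} (ha : Tendsto (fun x => a x / x) atTop (𝓝 0))
    (t : ℝ) : ∀ᶠ x in atTop, ∀ y ∈ Ioc 0 (a x), t ≤ x / y := by
  have ht : 0 < max t 1 := lt_max_of_lt_right one_pos
  filter_upwards [ha.eventually (gt_mem_nhds (inv_pos.mpr ht)), eventually_gt_atTop 0]
    with x hax hx y ⟨hy, hya⟩
  rw [div_lt_iff₀ hx, inv_mul_eq_div, lt_div_iff₀ ht] at hax
  rw [le_div_iff₀ hy]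
  nlinarith [le_max_left t 1]

lemma eventually_ne_zero_of_tendsto_div_one {f g : ℝ → ℝ} {l : Filter ℝ}
    (hfg : Tendsto (fun x => f x / g x) l (𝓝 1)) : ∀ᶠ x in l, g x ≠ 0 :=
  (hfg.eventually_ne one_ne_zero).mono fun x hx hgx => hx (by simp [hgx])

lemma limsup_div_comp_mul_le {T I g : ℝ → ℝ} {v c K : ℝ} (hv : 0 < v) (hT : ∀ x, 0 ≤ T x)
    (hI : ∀ x, 0 ≤ I x) (hTI : Tendsto (fun x => T x / I x) atTop (𝓝 1)) (hg : g =o[atTop] T)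
    (hIv : ∀ᶠ x in atTop, I (v * x) ≤ c * I x + K * g x) :
    limsup (fun x => T (v * x) / T x) atTop ≤ c := by
  have hTIv : Tendsto (fun x => T (v * x) / I (v * x)) atTop (𝓝 1) :=
    hTI.comp (tendsto_id.const_mul_atTop hv)
  -- each factor of the bound has a known limit: `1 * (c * 1⁻¹ + K * 0) = c`
  have hratio : ∀ᶠ x in atTop, T (v * x) / T x ≤
      T (v * x) / I (v * x) * (c * (T x / I x)⁻¹ + K * (g x / T x)) := by
    filter_upwards [hIv, eventually_ne_zero_of_tendsto_div_one hTIv] with x hx hIv0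
    have := hT x
    have := hT (v * x)
    have := hI (v * x)
    calc T (v * x) / T x = T (v * x) / I (v * x) * (I (v * x) / T x) :=
          (div_mul_div_cancel₀ hIv0).symm
      _ ≤ T (v * x) / I (v * x) * ((c * I x + K * g x) / T x) := by gcongr
      _ = T (v * x) / I (v * x) * (c * (T x / I x)⁻¹ + K * (g x / T x)) := by
          rw [inv_div]; ring
  have hlim : Tendsto (fun x => T (v * x) / I (v * x) *
      (c * (T x / I x)⁻¹ + K * (g x / T x))) atTop (𝓝 c) := by
    simpa using hTIv.mul (((hTI.inv₀ one_ne_zero).const_mul c).add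
      (hg.tendsto_div_nhds_zero.const_mul K))
  have hcobdd : IsCoboundedUnder (· ≤ ·) atTop fun x => T (v * x) / T x :=
    isCoboundedUnder_le_of_le atTop fun x => div_nonneg (hT _) (hT _)
  exact (limsup_le_limsup hratio hcobdd hlim.isBoundedUnder_le).trans_eq hlim.limsup_eq

theorem stmt4_general {Ω : Type*} [MeasureSpace Ω] [IsProbabilityMeasure (ℙ : Measure Ω)]
    (X Y : Ω → ℝ)
    (h : ℝ → ℝ) (K : ℝ) (hmeas : Measurable h)
    (hhpos : ∀ y, 0 < h y) (hbdd : ∀ y, h y ≤ K)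
    (hprod : Tendsto (fun x => rtail (fun ω => X ω * Y ω) x /
        ∫ y in Set.Ioi (0:ℝ), h y * rtail X (x / y) ∂(Measure.map Y ℙ)) atTop (𝓝 1))
    (a : ℝ → ℝ)
    (ha2 : Tendsto (fun x => a x / x) atTop (𝓝 0))
    (ha3 : (fun x => rtail Y (a x)) =o[atTop] rtail (fun ω => X ω * Y ω))
    (hPD : ∀ v : ℝ, 1 < v → limsup (fun x => rtail X (v * x) / rtail X x) atTop < 1) :
    ∀ v : ℝ, 1 < v →
      limsup (fun x => rtail (fun ω => X ω * Y ω) (v * x) /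
        rtail (fun ω => X ω * Y ω) x) atTop < 1 := by
  intro v hv
  have h0 : ∀ y, 0 ≤ h y := fun y => (hhpos y).le
  obtain ⟨c, hc, hc1⟩ := exists_between (max_lt (hPD v hv) one_pos)
  obtain ⟨t₀, ht₀⟩ := (eventually_le_mul_of_limsup_div_lt (rtail_antitone X) (rtail_nonneg X)
    hv.le ((le_max_left _ _).trans_lt hc)).exists_forall_of_atTop
  have hsplit : ∀ᶠ x in atTop, weightedProductTail (Measure.map Y ℙ) h X (v * x) ≤
      c * weightedProductTail (Measure.map Y ℙ) h X x + K * rtail Y (a x) := by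
    filter_upwards [eventually_forall_Ioc_le_div ha2 t₀] with x hx
    exact weightedProductTail_mul_le X hmeas h0 hbdd Y ((le_max_right _ _).trans hc.le)
      fun y hy => ht₀ _ (hx y hy)
  exact (limsup_div_comp_mul_le (by linarith) (rtail_nonneg _) (weightedProductTail_nonneg X h0)
    hprod ha3 hsplit).trans_lt hc1

/-- under the weak-dependence product representation and the truncation
condition, positive decrease of `F` transfers to the product distribution `H`. -/
theorem stmt4 {Ω : Type*} [MeasureSpace Ω] [IsProbabilityMeasure (ℙ : Measure Ω)]
    (X Y : Ω → ℝ) (hY : Measurable Y)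
    (hFpos : ∀ x : ℝ, 0 < rtail X x)
    (hGneg : ℙ {ω | Y ω < 0} = 0) (hG0 : ℙ {ω | Y ω ≤ 0} < 1)
    (h : ℝ → ℝ) (K : ℝ) (hmeas : Measurable h)
    (hhpos : ∀ y, 0 < h y) (hbdd : ∀ y, h y ≤ K)
    (hmean : ∫ y, h y ∂(Measure.map Y ℙ) = 1)
    (hprod : Tendsto (fun x => rtail (fun ω => X ω * Y ω) x /
        ∫ y in Set.Ioi (0:ℝ), h y * rtail X (x / y) ∂(Measure.map Y ℙ)) atTop (𝓝 1))
    (a : ℝ → ℝ) (ha1 : Tendsto a atTop atTop)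
    (ha2 : Tendsto (fun x => a x / x) atTop (𝓝 0))
    (ha3 : (fun x => rtail Y (a x)) =o[atTop] rtail (fun ω => X ω * Y ω))
    (hPD : ∀ v : ℝ, 1 < v → limsup (fun x => rtail X (v * x) / rtail X x) atTop < 1) :
    ∀ v : ℝ, 1 < v →
      limsup (fun x => rtail (fun ω => X ω * Y ω) (v * x) /
        rtail (fun ω => X ω * Y ω) x) atTop < 1 :=
  stmt4_general X Y h K hmeas hhpos hbdd hprod a ha2 ha3 hPD
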